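/- Let M, R₀ be positive integers, t > 0, D an invertible real diagonal R₀×R₀ matrix with diagonal entries d_1, …, d_{R₀} satisfying d_i ≠ 0 and 1 + t d_i > 0, V a real M×R₀ matrix with Vᵀ V = I_{R₀}, Σ := I_M + t V D Vᵀ, H a real symmetric M×M matrix, and Q := Σ^{1/2} H Σ^{1/2}. Let z ∈ ℂ, z ≠ 0, be such that z is not an eigenvalue of H, z is not an eigenvalue of Q, and D^{-1} + W(z) is invertible, where G(z) := (H − z I_M)^{-1} and W(z) := t · Vᵀ (I_M + z G(z)) V. Then Vᵀ (Q − z I_M)^{-1} V = (1/(t z)) · ( D^{-1} − D^{-1} (I + t D)^{1/2} (D^{-1} + W(z))^{-1} (I + t D)^{1/2} D^{-1} ). -/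

import Mathlib

open Matrix

noncomputable section

/-- Entrywise coercion of a real matrix to a complex matrix. -/
def cmat {m n : ℕ} (A : Matrix (Fin m) (Fin n) ℝ) : Matrix (Fin m) (Fin n) ℂ :=
  A.map (fun x => (x : ℂ))

lemma cmat_mul {m n p : ℕ} (A : Matrix (Fin m) (Fin n) ℝ) (B : Matrix (Fin n) (Fin p) ℝ) :
    cmat (A * B) = cmat A * cmat B := by
  ext i j
  simp [cmat, Matrix.mul_apply]

lemma cmat_transpose {m n : ℕ} (A : Matrix (Fin m) (Fin n) ℝ) : cmat Aᵀ = (cmat A)ᵀ := rfl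

lemma cmat_one {m : ℕ} : cmat (1 : Matrix (Fin m) (Fin m) ℝ) = 1 := by
  ext i j
  simp [cmat, Matrix.one_apply]
  split <;> simp

lemma cmat_add {m n : ℕ} (A B : Matrix (Fin m) (Fin n) ℝ) : cmat (A + B) = cmat A + cmat B := by
  ext i j; simp [cmat]

lemma cmat_sub {m n : ℕ} (A B : Matrix (Fin m) (Fin n) ℝ) : cmat (A - B) = cmat A - cmat B := by
  ext i j; simp [cmat]

lemma cmat_smul {m n : ℕ} (c : ℝ) (A : Matrix (Fin m) (Fin n) ℝ) :
    cmat (c • A) = (c : ℂ) • cmat A := by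
  ext i j; simp [cmat]

lemma cmat_diagonal {m : ℕ} (v : Fin m → ℝ) :
    cmat (Matrix.diagonal v) = Matrix.diagonal (fun i => (v i : ℂ)) := by
  ext i j
  simp [cmat, Matrix.diagonal_apply]
  split <;> simp

/-- Key product lemma for `1 + V a Vᵀ` matrices. -/
lemma key_prod {α : Type*} [CommRing α] {m n : ℕ} (V : Matrix (Fin m) (Fin n) α)
    (hV : Vᵀ * V = 1) (a b : Matrix (Fin n) (Fin n) α) :
    (1 + V * a * Vᵀ) * (1 + V * b * Vᵀ) = 1 + V * (a + b + a * b) * Vᵀ := by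
  have h : V * a * Vᵀ * (V * b * Vᵀ) = V * (a * b) * Vᵀ := by
    simp only [Matrix.mul_assoc]
    rw [← Matrix.mul_assoc Vᵀ V, hV, Matrix.one_mul]
  have expand : V * (a + b + a * b) * Vᵀ = V * a * Vᵀ + V * b * Vᵀ + V * (a * b) * Vᵀ := by
    simp only [Matrix.mul_add, Matrix.add_mul]
  rw [expand]
  simp only [Matrix.mul_add, Matrix.add_mul, Matrix.mul_one, Matrix.one_mul, h]
  abel

/-- Resolvent identity on the spike subspace:
`Vᵀ (Q - z)⁻¹ V = (tz)⁻¹ (D⁻¹ - D⁻¹ (1 + tD)^{1/2} (D⁻¹ + W(z))⁻¹ (1 + tD)^{1/2} D⁻¹)`,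
where `Q = Σ^{1/2} H Σ^{1/2}` and `W(z) = t Vᵀ (1 + z (H - z)⁻¹) V`. -/
theorem stmt12 (M R₀ : ℕ) (hM : 0 < M) (hR₀ : 0 < R₀)
    (t : ℝ) (ht : 0 < t)
    (d : Fin R₀ → ℝ) (hd0 : ∀ i, d i ≠ 0) (hd1 : ∀ i, 0 < 1 + t * d i)
    (V : Matrix (Fin M) (Fin R₀) ℝ) (hV : Vᵀ * V = 1)
    (H : Matrix (Fin M) (Fin M) ℝ) (hH : H.IsHermitian)
    (Sq : Matrix (Fin M) (Fin M) ℝ) (hSqpsd : Sq.PosSemidef)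
    (hSq : Sq * Sq = 1 + t • (V * Matrix.diagonal d * Vᵀ))
    (z : ℂ) (hz : z ≠ 0)
    (hzH : z ∉ spectrum ℂ (cmat H)) (hzQ : z ∉ spectrum ℂ (cmat (Sq * H * Sq)))
    (hDW : ((Matrix.diagonal fun i => (d i : ℂ))⁻¹ +
      (t : ℂ) • ((cmat V)ᵀ * (1 + z • (cmat H - z • 1)⁻¹) * cmat V)).det ≠ 0) :
    (cmat V)ᵀ * (cmat (Sq * H * Sq) - z • 1)⁻¹ * cmat V =
      ((t : ℂ) * z)⁻¹ •
        ((Matrix.diagonal fun i => (d i : ℂ))⁻¹ -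
          (Matrix.diagonal fun i => (d i : ℂ))⁻¹ *
            (Matrix.diagonal fun i => ((Real.sqrt (1 + t * d i) : ℝ) : ℂ)) *
            ((Matrix.diagonal fun i => (d i : ℂ))⁻¹ +
              (t : ℂ) • ((cmat V)ᵀ * (1 + z • (cmat H - z • 1)⁻¹) * cmat V))⁻¹ *
            (Matrix.diagonal fun i => ((Real.sqrt (1 + t * d i) : ℝ) : ℂ)) *
            (Matrix.diagonal fun i => (d i : ℂ))⁻¹) := by
  -- scalar facts
  have htne : (t : ℂ) ≠ 0 := by exact_mod_cast ht.ne'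
  have htd : ∀ i, (1 + t * d i : ℝ) ≠ 0 := fun i => (hd1 i).ne'
  have hd0c : ∀ i, (d i : ℂ) ≠ 0 := fun i => by exact_mod_cast hd0 i
  have htd0c : ∀ i, (1 : ℂ) + (t : ℂ) * (d i : ℂ) ≠ 0 := fun i => by
    have := htd i; exact_mod_cast this
  set s : Fin R₀ → ℂ := fun i => ((Real.sqrt (1 + t * d i) : ℝ) : ℂ) with hs_def
  have hs2 : ∀ i, s i * s i = 1 + (t : ℂ) * (d i : ℂ) := by
    intro i
    have : Real.sqrt (1 + t * d i) * Real.sqrt (1 + t * d i) = 1 + t * d i :=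
      Real.mul_self_sqrt (hd1 i).le
    calc s i * s i = ((Real.sqrt (1 + t * d i) * Real.sqrt (1 + t * d i) : ℝ) : ℂ) := by
          rw [hs_def]; push_cast; ring
      _ = ((1 + t * d i : ℝ) : ℂ) := by rw [this]
      _ = 1 + (t : ℂ) * (d i : ℂ) := by push_cast; ring
  have hs0 : ∀ i, s i ≠ 0 := by
    intro i
    rw [hs_def]
    simp only [ne_eq, Complex.ofReal_eq_zero]
    exact (Real.sqrt_pos.mpr (hd1 i)).ne'
  -- identify the square root Sq explicitly
  have hSqeq : Sq = 1 + V * Matrix.diagonal (fun i => Real.sqrt (1 + t * d i) - 1) * Vᵀ := by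
    set r : Fin R₀ → ℝ := fun i => Real.sqrt (1 + t * d i) with hr_def
    have hr_nonneg : ∀ i, 0 ≤ r i := fun i => Real.sqrt_nonneg _
    have hr2 : ∀ i, r i * r i = 1 + t * d i := fun i => Real.mul_self_sqrt (hd1 i).le
    set Bm : Matrix (Fin M) (Fin M) ℝ := 1 + V * Matrix.diagonal (fun i => r i - 1) * Vᵀ with hBm_def
    have hBmalt : Bm = (1 - V * Vᵀ) + V * Matrix.diagonal r * Vᵀ := by
      rw [hBm_def]
      have : Matrix.diagonal (fun i => r i - 1) = Matrix.diagonal r - 1 := by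
        rw [← Matrix.diagonal_one, Matrix.diagonal_sub]
      rw [this, Matrix.mul_sub, Matrix.sub_mul, Matrix.mul_one]
      abel
    have hproj : (1 - V * Vᵀ) * (1 - V * Vᵀ) = 1 - V * Vᵀ := by
      have h : V * Vᵀ * (V * Vᵀ) = V * Vᵀ := by
        simp only [Matrix.mul_assoc]
        rw [← Matrix.mul_assoc Vᵀ V, hV, Matrix.one_mul]
      simp only [Matrix.mul_sub, Matrix.sub_mul, Matrix.mul_one, Matrix.one_mul, h]
      abel
    have hpsd1 : (1 - V * Vᵀ).PosSemidef := by
      have hsym : (1 - V * Vᵀ)ᴴ = 1 - V * Vᵀ := by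
        simp [Matrix.conjTranspose_sub, Matrix.conjTranspose_mul]
      have := Matrix.posSemidef_conjTranspose_mul_self (1 - V * Vᵀ)
      rwa [hsym, hproj] at this
    have hpsd2 : (V * Matrix.diagonal r * Vᵀ).PosSemidef := by
      set C : Matrix (Fin M) (Fin R₀) ℝ := V * Matrix.diagonal (fun i => Real.sqrt (r i)) with hC_def
      have hCC : C * Cᴴ = V * Matrix.diagonal r * Vᵀ := by
        rw [hC_def]
        have hH' : (V * Matrix.diagonal (fun i => Real.sqrt (r i)))ᴴ =
            Matrix.diagonal (fun i => Real.sqrt (r i)) * Vᵀ := by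
          simp [Matrix.conjTranspose_mul, Matrix.diagonal_transpose]
        rw [hH']
        have hdd : Matrix.diagonal (fun i => Real.sqrt (r i)) *
            Matrix.diagonal (fun i => Real.sqrt (r i)) = Matrix.diagonal r := by
          rw [Matrix.diagonal_mul_diagonal]
          have : (fun i => Real.sqrt (r i) * Real.sqrt (r i)) = r :=
            funext fun i => Real.mul_self_sqrt (hr_nonneg i)
          rw [this]
        rw [Matrix.mul_assoc, ← Matrix.mul_assoc (Matrix.diagonal fun i => Real.sqrt (r i)), hdd,
          Matrix.mul_assoc]
      have := Matrix.posSemidef_self_mul_conjTranspose C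
      rwa [hCC] at this
    have hBmpsd : Bm.PosSemidef := by
      rw [hBmalt]; exact hpsd1.add hpsd2
    have hsq : Sq ^ 2 = Bm ^ 2 := by
      have hBm2 : Bm * Bm = 1 + V * Matrix.diagonal (fun i => t * d i) * Vᵀ := by
        rw [hBm_def, key_prod V hV]
        congr 2
        have expand : Matrix.diagonal (fun i => r i - 1) + Matrix.diagonal (fun i => r i - 1) +
            Matrix.diagonal (fun i => r i - 1) * Matrix.diagonal (fun i => r i - 1) =
            Matrix.diagonal (fun i => (r i - 1) + (r i - 1) + (r i - 1) * (r i - 1)) := by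
          rw [Matrix.diagonal_mul_diagonal, ← Matrix.diagonal_add, ← Matrix.diagonal_add]
        rw [expand]
        have : (fun i => (r i - 1) + (r i - 1) + (r i - 1) * (r i - 1)) =
            (fun i => t * d i) := funext fun i => by linear_combination hr2 i
        rw [this]
      have hrhs : 1 + V * Matrix.diagonal (fun i => t * d i) * Vᵀ =
          1 + t • (V * Matrix.diagonal d * Vᵀ) := by
        have : Matrix.diagonal (fun i => t * d i) = t • Matrix.diagonal d := by
          rw [← Matrix.diagonal_smul]; rfl
        rw [this, Matrix.mul_smul, Matrix.smul_mul]
      rw [pow_two, pow_two, hBm2, hrhs, hSq]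
    open scoped MatrixOrder in
    exact (CFC.sq_eq_sq_iff Sq Bm hSqpsd.nonneg hBmpsd.nonneg).mp hsq
  -- pass to complex matrices
  set Vc : Matrix (Fin M) (Fin R₀) ℂ := cmat V with hVc_def
  set Hc : Matrix (Fin M) (Fin M) ℂ := cmat H with hHc_def
  set Dc : Matrix (Fin R₀) (Fin R₀) ℂ := Matrix.diagonal (fun i => (d i : ℂ)) with hDc_def
  set S : Matrix (Fin R₀) (Fin R₀) ℂ := Matrix.diagonal s with hS_def
  set S' : Matrix (Fin R₀) (Fin R₀) ℂ := Matrix.diagonal (fun i => (s i)⁻¹) with hS'_def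
  have hVcV : Vcᵀ * Vc = 1 := by
    rw [hVc_def, ← cmat_transpose, ← cmat_mul, hV, cmat_one]
  set Az : Matrix (Fin M) (Fin M) ℂ := Hc - z • 1 with hAz_def
  set G : Matrix (Fin M) (Fin M) ℂ := Az⁻¹ with hG_def
  set B : Matrix (Fin R₀) (Fin R₀) ℂ := Vcᵀ * (G * Vc) with hB_def
  set K : Matrix (Fin R₀) (Fin R₀) ℂ := Dc⁻¹ + (t : ℂ) • (Vcᵀ * (1 + z • G) * Vc) with hK_def
  -- invertibility facts
  have hAzu : IsUnit Az.det := by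
    have h1 : IsUnit (algebraMap ℂ (Matrix (Fin M) (Fin M) ℂ) z - Hc) :=
      spectrum.notMem_iff.mp hzH
    rw [Algebra.algebraMap_eq_smul_one] at h1
    have h2 : IsUnit (-(z • (1 : Matrix (Fin M) (Fin M) ℂ) - Hc)) := h1.neg
    rw [neg_sub] at h2
    exact (Matrix.isUnit_iff_isUnit_det _).mp h2
  have hAzG : Az * G = 1 := Matrix.mul_nonsing_inv _ hAzu
  have hGAz : G * Az = 1 := Matrix.nonsing_inv_mul _ hAzu
  have hKu : IsUnit K.det := isUnit_iff_ne_zero.mpr hDW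
  have hKKi : K * K⁻¹ = 1 := Matrix.mul_nonsing_inv _ hKu
  have hKiK : K⁻¹ * K = 1 := Matrix.nonsing_inv_mul _ hKu
  have hDinv : Dc⁻¹ = Matrix.diagonal (fun i => (d i : ℂ)⁻¹) := by
    apply Matrix.inv_eq_right_inv
    rw [hDc_def, Matrix.diagonal_mul_diagonal]
    have : (fun i => (d i : ℂ) * (d i : ℂ)⁻¹) = fun _ => 1 :=
      funext fun i => mul_inv_cancel₀ (hd0c i)
    rw [this, Matrix.diagonal_one]
  -- R and P
  set R : Matrix (Fin M) (Fin M) ℂ := 1 + Vc * (S - 1) * Vcᵀ with hR_def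
  set P : Matrix (Fin M) (Fin M) ℂ := 1 + Vc * (S' - 1) * Vcᵀ with hP_def
  have hSS' : S * S' = 1 := by
    rw [hS_def, hS'_def, Matrix.diagonal_mul_diagonal]
    have : (fun i => s i * (s i)⁻¹) = fun _ => (1 : ℂ) :=
      funext fun i => mul_inv_cancel₀ (hs0 i)
    rw [this, Matrix.diagonal_one]
  have hS'S : S' * S = 1 := by
    rw [hS_def, hS'_def, Matrix.diagonal_mul_diagonal]
    have : (fun i => (s i)⁻¹ * s i) = fun _ => (1 : ℂ) :=
      funext fun i => inv_mul_cancel₀ (hs0 i)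
    rw [this, Matrix.diagonal_one]
  have hRP : R * P = 1 := by
    rw [hR_def, hP_def, key_prod Vc hVcV]
    have : (S - 1) + (S' - 1) + (S - 1) * (S' - 1) = S * S' - 1 := by noncomm_ring
    rw [this, hSS', sub_self, Matrix.mul_zero, Matrix.zero_mul, add_zero]
  have hPR : P * R = 1 := by
    rw [hR_def, hP_def, key_prod Vc hVcV]
    have : (S' - 1) + (S - 1) + (S' - 1) * (S - 1) = S' * S - 1 := by noncomm_ring
    rw [this, hS'S, sub_self, Matrix.mul_zero, Matrix.zero_mul, add_zero]
  have hPVc : P * Vc = Vc * S' := by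
    rw [hP_def, Matrix.add_mul, Matrix.one_mul, Matrix.mul_assoc (Vc * (S' - 1)) Vcᵀ Vc, hVcV,
      Matrix.mul_one, Matrix.mul_sub, Matrix.mul_one]
    abel
  have hVcP : Vcᵀ * P = S' * Vcᵀ := by
    rw [hP_def, Matrix.mul_add, Matrix.mul_one, ← Matrix.mul_assoc, ← Matrix.mul_assoc, hVcV,
      Matrix.one_mul, Matrix.sub_mul, Matrix.one_mul]
    abel
  -- cmat Sq = R
  have hcmSq : cmat Sq = R := by
    rw [hSqeq, cmat_add, cmat_one, cmat_mul, cmat_mul, cmat_transpose, cmat_diagonal, hR_def]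
    have hdiag : (Matrix.diagonal (fun i => ((Real.sqrt (1 + t * d i) - 1 : ℝ) : ℂ))) = S - 1 := by
      have h1 : (fun i => ((Real.sqrt (1 + t * d i) - 1 : ℝ) : ℂ)) = fun i => s i - 1 := by
        funext i; push_cast; rfl
      rw [h1, ← Matrix.diagonal_sub, Matrix.diagonal_one, hS_def]
    rw [hdiag]
  -- helper rewriting lemmas (right-associated)
  have hVVx : ∀ {p : ℕ} (x : Matrix (Fin R₀) (Fin p) ℂ), Vcᵀ * (Vc * x) = x := by
    intro p x; rw [← Matrix.mul_assoc, hVcV, Matrix.one_mul]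
  have hAzGx : ∀ {p : ℕ} (x : Matrix (Fin M) (Fin p) ℂ), Az * (G * x) = x := by
    intro p x; rw [← Matrix.mul_assoc, hAzG, Matrix.one_mul]
  have hKKix : ∀ {p : ℕ} (x : Matrix (Fin R₀) (Fin p) ℂ), K * (K⁻¹ * x) = x := by
    intro p x; rw [← Matrix.mul_assoc, hKKi, Matrix.one_mul]
  have hKiKx : ∀ {p : ℕ} (x : Matrix (Fin R₀) (Fin p) ℂ), K⁻¹ * (K * x) = x := by
    intro p x; rw [← Matrix.mul_assoc, hKiK, Matrix.one_mul]
  have hRPx : ∀ {p : ℕ} (x : Matrix (Fin M) (Fin p) ℂ), R * (P * x) = x := by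
    intro p x; rw [← Matrix.mul_assoc, hRP, Matrix.one_mul]
  have hBx : ∀ {p : ℕ} (x : Matrix (Fin R₀) (Fin p) ℂ), Vcᵀ * (G * (Vc * x)) = B * x := by
    intro p x
    rw [hB_def, Matrix.mul_assoc, Matrix.mul_assoc]
  -- diagonal matrices F and N
  set F : Matrix (Fin R₀) (Fin R₀) ℂ :=
    Matrix.diagonal (fun i => (t : ℂ) * (d i : ℂ) / (1 + (t : ℂ) * (d i : ℂ))) with hF_def
  set N : Matrix (Fin R₀) (Fin R₀) ℂ :=
    Matrix.diagonal (fun i => (d i : ℂ)⁻¹ + (t : ℂ)) with hN_def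
  have hsmul_one : ∀ (c : ℂ), c • (1 : Matrix (Fin R₀) (Fin R₀) ℂ) =
      Matrix.diagonal (fun _ => c) := by
    intro c
    rw [← Matrix.diagonal_one, ← Matrix.diagonal_smul]
    have : (c • fun _ : Fin R₀ => (1 : ℂ)) = fun _ => c := funext fun i => by simp
    rw [this]
  have hNval : Dc⁻¹ + (t : ℂ) • 1 = N := by
    rw [hDinv, hsmul_one, hN_def, Matrix.diagonal_add]
  -- K = N + (t z) • B
  have hKN : K = N + ((t : ℂ) * z) • B := by
    have hmid : Vcᵀ * (1 + z • G) * Vc = 1 + z • B := by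
      rw [Matrix.mul_add, Matrix.mul_one, Matrix.add_mul, hVcV, Matrix.mul_smul,
        Matrix.smul_mul, Matrix.mul_assoc, hB_def]
    rw [hK_def, hmid, smul_add, smul_smul, ← hNval]
    abel
  -- F * N = t • 1
  have hFN : F * N = (t : ℂ) • 1 := by
    rw [hF_def, hN_def, Matrix.diagonal_mul_diagonal, hsmul_one]
    have : (fun i => (t : ℂ) * (d i : ℂ) / (1 + (t : ℂ) * (d i : ℂ)) * ((d i : ℂ)⁻¹ + (t : ℂ))) =
        fun _ => (t : ℂ) := by
      funext i
      field_simp [hd0c i, htd0c i]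
    rw [this]
  have hFK : F * K = (t : ℂ) • 1 + ((t : ℂ) * z) • (F * B) := by
    rw [hKN, Matrix.mul_add, hFN, Matrix.mul_smul]
  have hFexp : F = (t : ℂ) • K⁻¹ + ((t : ℂ) * z) • (F * (B * K⁻¹)) := by
    calc F = F * (K * K⁻¹) := by rw [hKKi, Matrix.mul_one]
      _ = (F * K) * K⁻¹ := by rw [Matrix.mul_assoc]
      _ = (t : ℂ) • K⁻¹ + ((t : ℂ) * z) • (F * (B * K⁻¹)) := by
          rw [hFK, Matrix.add_mul, Matrix.smul_mul, Matrix.one_mul, Matrix.smul_mul,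
            Matrix.mul_assoc]
  -- S' * S' and F
  have hS'2 : S' * S' = Matrix.diagonal (fun i => (1 + (t : ℂ) * (d i : ℂ))⁻¹) := by
    rw [hS'_def, Matrix.diagonal_mul_diagonal]
    have : (fun i => (s i)⁻¹ * (s i)⁻¹) = fun i => (1 + (t : ℂ) * (d i : ℂ))⁻¹ := by
      funext i
      rw [← mul_inv, hs2 i]
    rw [this]
  have hFdef : (1 : Matrix (Fin R₀) (Fin R₀) ℂ) - S' * S' = F := by
    rw [hS'2, hF_def, ← Matrix.diagonal_one, Matrix.diagonal_sub]
    have : (fun i => (1 : ℂ) - (1 + (t : ℂ) * (d i : ℂ))⁻¹) =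
        fun i => (t : ℂ) * (d i : ℂ) / (1 + (t : ℂ) * (d i : ℂ)) := by
      funext i
      field_simp [htd0c i]
      ring
    rw [this]
  have hPP : P * P = 1 + Vc * (S' * S' - 1) * Vcᵀ := by
    rw [hP_def, key_prod Vc hVcV]
    have : (S' - 1) + (S' - 1) + (S' - 1) * (S' - 1) = S' * S' - 1 := by noncomm_ring
    rw [this]
  set A' : Matrix (Fin M) (Fin M) ℂ :=
    G - ((t : ℂ) * z) • (G * (Vc * (K⁻¹ * (Vcᵀ * G)))) with hA'_def
  have hcomb : z • (Vc * (F * (Vcᵀ * G))) =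
      ((t : ℂ) * z) • (Vc * (K⁻¹ * (Vcᵀ * G))) +
        (z * ((t : ℂ) * z)) • (Vc * (F * (B * (K⁻¹ * (Vcᵀ * G))))) := by
    conv_lhs => rw [hFexp]
    simp only [Matrix.add_mul, Matrix.mul_add, Matrix.smul_mul, Matrix.mul_smul, smul_smul,
      smul_add, Matrix.mul_assoc]
    module
  have core : (Az + z • (Vc * (F * Vcᵀ))) * A' = 1 := by
    rw [hA'_def]
    simp only [Matrix.add_mul, Matrix.mul_sub, Matrix.smul_mul, Matrix.mul_smul, smul_smul,
      smul_sub, Matrix.mul_assoc, hAzG, hAzGx, hBx, hVVx]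
    rw [hcomb]
    module
  -- Hc - z (P*P) = Az + z Vc F Vcᵀ
  have hA : Hc - z • (P * P) = Az + z • (Vc * (F * Vcᵀ)) := by
    rw [hPP, hAz_def]
    have h1 : Vc * (F * Vcᵀ) = -(Vc * (S' * S' - 1) * Vcᵀ) := by
      rw [← hFdef]
      have h2 : ((1 : Matrix (Fin R₀) (Fin R₀) ℂ) - S' * S') * Vcᵀ =
          -((S' * S' - 1) * Vcᵀ) := by
        rw [Matrix.sub_mul, Matrix.sub_mul, Matrix.one_mul, neg_sub]
      rw [Matrix.mul_assoc, h2, Matrix.mul_neg]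
    rw [h1, smul_add, smul_neg]
    abel
  -- factor Q - z
  have hQfact : cmat (Sq * H * Sq) - z • 1 = R * ((Az + z • (Vc * (F * Vcᵀ))) * R) := by
    rw [← hA]
    have hQc : cmat (Sq * H * Sq) = R * (Hc * R) := by
      rw [cmat_mul, cmat_mul, hcmSq, ← hHc_def, Matrix.mul_assoc]
    rw [hQc]
    calc R * (Hc * R) - z • 1
        = R * (Hc * R) - z • (R * (P * (P * R))) := by rw [hRPx, hPR]
      _ = R * ((Hc - z • (P * P)) * R) := by
          rw [Matrix.sub_mul, Matrix.mul_sub, Matrix.smul_mul, Matrix.mul_smul,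
            Matrix.mul_assoc P P R]
  have hinv : (cmat (Sq * H * Sq) - z • 1)⁻¹ = P * (A' * P) := by
    apply Matrix.inv_eq_right_inv
    rw [hQfact]
    calc R * ((Az + z • (Vc * (F * Vcᵀ))) * R) * (P * (A' * P))
        = R * ((Az + z • (Vc * (F * Vcᵀ))) * (R * (P * (A' * P)))) := by
          simp only [Matrix.mul_assoc]
      _ = R * ((Az + z • (Vc * (F * Vcᵀ))) * (A' * P)) := by rw [hRPx]
      _ = R * (((Az + z • (Vc * (F * Vcᵀ))) * A') * P) := by rw [Matrix.mul_assoc]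
      _ = R * P := by rw [core, Matrix.one_mul]
      _ = 1 := hRP
  -- compute Vᵀ (Q - z)⁻¹ V
  have hVA'V : Vcᵀ * (P * (A' * P)) * Vc =
      S' * ((B * S') - ((t : ℂ) * z) • (B * (K⁻¹ * (B * S')))) := by
    calc Vcᵀ * (P * (A' * P)) * Vc
        = (Vcᵀ * P) * (A' * (P * Vc)) := by simp only [Matrix.mul_assoc]
      _ = (S' * Vcᵀ) * (A' * (Vc * S')) := by rw [hVcP, hPVc]
      _ = S' * (Vcᵀ * (A' * (Vc * S'))) := by simp only [Matrix.mul_assoc]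
      _ = S' * ((B * S') - ((t : ℂ) * z) • (B * (K⁻¹ * (B * S')))) := by
          rw [hA'_def]
          simp only [Matrix.sub_mul, Matrix.mul_sub, Matrix.smul_mul, Matrix.mul_smul,
            Matrix.mul_assoc, hBx, hVVx]
  have htzB : ((t : ℂ) * z) • B = K - N := by
    rw [hKN]; abel
  have h5 : ((t : ℂ) * z) • ((B * S') - ((t : ℂ) * z) • (B * (K⁻¹ * (B * S')))) =
      (N - N * (K⁻¹ * N)) * S' := by
    calc ((t : ℂ) * z) • ((B * S') - ((t : ℂ) * z) • (B * (K⁻¹ * (B * S'))))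
        = (((t : ℂ) * z) • B) * S' -
            (((t : ℂ) * z) • B) * (K⁻¹ * ((((t : ℂ) * z) • B) * S')) := by
          simp only [smul_sub, smul_smul, Matrix.smul_mul, Matrix.mul_smul]
      _ = (K - N) * S' - (K - N) * (K⁻¹ * ((K - N) * S')) := by rw [htzB]
      _ = (N - N * (K⁻¹ * N)) * S' := by
          simp only [Matrix.sub_mul, Matrix.mul_sub, hKKix, hKiKx, Matrix.mul_assoc]
          abel
  have hS'N : S' * N = Dc⁻¹ * S := by
    rw [hS'_def, hN_def, hDinv, hS_def, Matrix.diagonal_mul_diagonal,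
      Matrix.diagonal_mul_diagonal]
    have : (fun i => (s i)⁻¹ * ((d i : ℂ)⁻¹ + (t : ℂ))) = fun i => (d i : ℂ)⁻¹ * s i := by
      funext i
      have h2 := hs2 i
      field_simp [hs0 i, hd0c i]
      linear_combination (-1 : ℂ) * h2
    rw [this]
  have hNS' : N * S' = S * Dc⁻¹ := by
    rw [hS'_def, hN_def, hDinv, hS_def, Matrix.diagonal_mul_diagonal,
      Matrix.diagonal_mul_diagonal]
    have : (fun i => ((d i : ℂ)⁻¹ + (t : ℂ)) * (s i)⁻¹) = fun i => s i * (d i : ℂ)⁻¹ := by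
      funext i
      have h2 := hs2 i
      field_simp [hs0 i, hd0c i]
      linear_combination (-1 : ℂ) * h2
    rw [this]
  have htz : ((t : ℂ) * z) ≠ 0 := mul_ne_zero htne hz
  have hmain : ((t : ℂ) * z) • (Vcᵀ * (cmat (Sq * H * Sq) - z • 1)⁻¹ * Vc) =
      Dc⁻¹ - Dc⁻¹ * S * K⁻¹ * S * Dc⁻¹ := by
    rw [hinv, hVA'V]
    calc ((t : ℂ) * z) • (S' * ((B * S') - ((t : ℂ) * z) • (B * (K⁻¹ * (B * S')))))
        = S' * (((t : ℂ) * z) • ((B * S') - ((t : ℂ) * z) • (B * (K⁻¹ * (B * S'))))) := by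
          rw [Matrix.mul_smul]
      _ = S' * ((N - N * (K⁻¹ * N)) * S') := by rw [h5]
      _ = S' * (N * S') - S' * (N * (K⁻¹ * (N * S'))) := by
          simp only [Matrix.sub_mul, Matrix.mul_sub, Matrix.mul_assoc]
      _ = Dc⁻¹ - Dc⁻¹ * S * K⁻¹ * S * Dc⁻¹ := by
          rw [hNS', ← Matrix.mul_assoc S' S Dc⁻¹, hS'S, Matrix.one_mul,
            ← Matrix.mul_assoc S' N, hS'N]
          simp only [Matrix.mul_assoc]
  rw [← hmain, inv_smul_smul₀ htz]
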